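/- arXiv:2103.11026 — 2 statements merged into one kernel-verified Lean document; each statement's English description precedes it below -/
import Mathlib

section
/- Let f : H → ℝ be convex and differentiable on a convex set X in a real inner product space, with Hölder continuous gradient: ‖∇f(x) - ∇f(y)‖ ≤ M_ν ‖x - y‖^ν for all x, y ∈ X, where ν ∈ [0,1] and M_ν > 0. Then for any τ > 0 and any L ≥ ((1-ν)/((1+ν)·τ))^((1-ν)/(1+ν)) · M_ν^(2/(1+ν)), we have f(y) ≤ f(x) + ⟨∇f(x), y - x⟩ + (L/2)‖y - x‖² + τ/2 for all x, y ∈ X. -/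
open RealInnerProductSpace Set

/-! Along the segment `x + t (y - x)` the derivative of `f` differs from `⟪G x, y - x⟫` by at most
`M ‖y - x‖^(1+ν) t^ν`; comparing with the antiderivative `t^(1+ν)/(1+ν)` gives the Hölder descent
bound `f y ≤ f x + ⟪G x, y - x⟫ + M/(1+ν) ‖y - x‖^(1+ν)`. Weighted AM-GM with weights `(1+ν)/2`
and `(1-ν)/2` then splits `r^(1+ν)` into a multiple of `r²` plus a constant, and the lower bound
on `L` is exactly what makes that constant `τ/2`. -/

theorem HasGradientWithinAt.hasDerivWithinAt_comp_add_smul_sub {H : Type*}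
    [NormedAddCommGroup H] [InnerProductSpace ℝ H] [CompleteSpace H] {X : Set H}
    (hX : Convex ℝ X) {f : H → ℝ} {g : H} {x y : H} (hx : x ∈ X) (hy : y ∈ X) {t : ℝ}
    (hf : HasGradientWithinAt f g X (x + t • (y - x))) :
    HasDerivWithinAt (fun s : ℝ ↦ f (x + s • (y - x))) ⟪g, y - x⟫ (Icc 0 1) t := by
  have hline : HasDerivAt (fun s : ℝ ↦ x + s • (y - x)) (y - x) t := by
    simpa using ((hasDerivAt_id t).smul_const (y - x)).const_add x
  have h := hf.hasFDerivWithinAt.comp_hasDerivWithinAt t hline.hasDerivWithinAt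
    fun s hs ↦ hX.add_smul_sub_mem hx hy hs
  simp only [InnerProductSpace.toDual_apply_apply] at h
  exact h

theorem Real.hasDerivAt_rpow_one_add_div {ν : ℝ} (hν : 0 ≤ ν) (t : ℝ) :
    HasDerivAt (fun s : ℝ ↦ s ^ (1 + ν) / (1 + ν)) (t ^ ν) t := by
  have h := (Real.hasDerivAt_rpow_const (x := t) (Or.inr (by linarith : 1 ≤ 1 + ν))).div_const
    (1 + ν)
  rw [add_sub_cancel_left, mul_div_cancel_left₀ _ (by linarith : 1 + ν ≠ 0)] at h
  exact h

theorem Convex.le_add_inner_add_rpow_of_holder_gradient {H : Type*}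
    [NormedAddCommGroup H] [InnerProductSpace ℝ H] [CompleteSpace H] {X : Set H}
    (hX : Convex ℝ X) {f : H → ℝ} {G : H → H} (hf : ∀ z ∈ X, HasGradientWithinAt f (G z) X z)
    {ν M : ℝ} (hν : 0 ≤ ν) (hG : ∀ z ∈ X, ∀ w ∈ X, ‖G z - G w‖ ≤ M * ‖z - w‖ ^ ν)
    {x y : H} (hx : x ∈ X) (hy : y ∈ X) :
    f y ≤ f x + ⟪G x, y - x⟫ + M / (1 + ν) * ‖y - x‖ ^ (1 + ν) := by
  set v := y - x
  have hmem (t : ℝ) (ht : t ∈ Icc (0 : ℝ) 1) : x + t • v ∈ X := hX.add_smul_sub_mem hx hy ht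
  have hφ (t : ℝ) (ht : t ∈ Icc (0 : ℝ) 1) :
      HasDerivWithinAt (fun s ↦ f (x + s • v) - s * ⟪G x, v⟫) (⟪G (x + t • v) - G x, v⟫)
        (Icc 0 1) t := by
    rw [inner_sub_left]
    exact ((hf _ (hmem t ht)).hasDerivWithinAt_comp_add_smul_sub hX hx hy).sub
      (hasDerivAt_mul_const _).hasDerivWithinAt
  have hB (t : ℝ) : HasDerivAt (fun s ↦ f x + M * ‖v‖ ^ (1 + ν) * (s ^ (1 + ν) / (1 + ν)))
      (M * ‖v‖ ^ (1 + ν) * t ^ ν) t :=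
    ((Real.hasDerivAt_rpow_one_add_div hν t).const_mul _).const_add _
  have hbound (t : ℝ) (ht : t ∈ Icc (0 : ℝ) 1) :
      ⟪G (x + t • v) - G x, v⟫ ≤ M * ‖v‖ ^ (1 + ν) * t ^ ν := by
    have hdist : ‖x + t • v - x‖ = t * ‖v‖ := by
      rw [add_sub_cancel_left, norm_smul, Real.norm_of_nonneg ht.1]
    calc ⟪G (x + t • v) - G x, v⟫ ≤ ‖G (x + t • v) - G x‖ * ‖v‖ := real_inner_le_norm _ _
      _ ≤ M * ‖x + t • v - x‖ ^ ν * ‖v‖ :=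
        mul_le_mul_of_nonneg_right (hG _ (hmem t ht) x hx) (norm_nonneg v)
      _ = M * ‖v‖ ^ (1 + ν) * t ^ ν := by
        rw [hdist, Real.mul_rpow ht.1 (norm_nonneg v),
          Real.rpow_add' (norm_nonneg v) (by linarith), Real.rpow_one]
        ring
  have key := image_le_of_deriv_right_le_deriv_boundary
    (fun t ht ↦ (hφ t ht).continuousWithinAt)
    (fun t ht ↦ (hφ t (Ico_subset_Icc_self ht)).mono_of_mem_nhdsWithin
      (Icc_mem_nhdsGE_of_mem ht))
    (by simp [Real.zero_rpow (by linarith : (1 : ℝ) + ν ≠ 0)])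
    (fun t _ ↦ (hB t).continuousAt.continuousWithinAt)
    (fun t _ ↦ (hB t).hasDerivWithinAt)
    (fun t ht ↦ hbound t (Ico_subset_Icc_self ht)) (right_mem_Icc.mpr zero_le_one)
  simp only [one_smul, add_sub_cancel, Real.one_rpow, v] at key
  linarith [show M * ‖y - x‖ ^ (1 + ν) * (1 / (1 + ν)) = M / (1 + ν) * ‖y - x‖ ^ (1 + ν) by ring]

theorem Real.div_one_add_le_rpow_mul_rpow {ν M τ L : ℝ} (hν : ν ∈ Icc (0 : ℝ) 1) (hM : 0 ≤ M)
    (hτ : 0 < τ)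
    (hL : ((1 - ν) / ((1 + ν) * τ)) ^ ((1 - ν) / (1 + ν)) * M ^ (2 / (1 + ν)) ≤ L) :
    M / (1 + ν) ≤ (L / (1 + ν)) ^ ((1 + ν) / 2) * (τ / (1 - ν)) ^ ((1 - ν) / 2) := by
  obtain ⟨hν0, hν1⟩ := hν
  set a := (1 - ν) / 2
  set b := (1 + ν) / 2
  set c := (1 - ν) / ((1 + ν) * τ)
  have hc : 0 ≤ c := div_nonneg (by linarith) (by positivity)
  have hK : 0 ≤ c ^ ((1 - ν) / (1 + ν)) * M ^ (2 / (1 + ν)) := by positivity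
  have hLb : c ^ a * M ≤ L ^ b := by
    have h := Real.rpow_le_rpow hK hL (by positivity : 0 ≤ b)
    rwa [Real.mul_rpow (by positivity) (by positivity), ← Real.rpow_mul hc, ← Real.rpow_mul hM,
      show (1 - ν) / (1 + ν) * b = a by simp only [a, b]; field_simp,
      show 2 / (1 + ν) * b = 1 by simp only [b]; field_simp,
      Real.rpow_one] at h
  -- at `ν = 1` the base below is junk (`τ / 0 = 0`), but then `a = 0`
  have hone : ((1 + ν) * c * (τ / (1 - ν))) ^ a = 1 := by
    rcases eq_or_lt_of_le hν1 with rfl | hlt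
    · simp [a]
    · rw [show (1 + ν) * c * (τ / (1 - ν)) = 1 by simp only [c]; field_simp, Real.one_rpow]
  calc M / (1 + ν)
      = M * ((1 + ν) * c * (τ / (1 - ν))) ^ a / ((1 + ν) ^ a * (1 + ν) ^ b) := by
        rw [hone, ← Real.rpow_add (by linarith), show a + b = 1 by ring, Real.rpow_one, mul_one]
    _ = c ^ a * M * (τ / (1 - ν)) ^ a / (1 + ν) ^ b := by
        rw [Real.mul_rpow (by positivity) (div_nonneg hτ.le (by linarith)),
          Real.mul_rpow (by linarith) hc]
        field_simp
    _ ≤ L ^ b * (τ / (1 - ν)) ^ a / (1 + ν) ^ b := by gcongr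
    _ = (L / (1 + ν)) ^ b * (τ / (1 - ν)) ^ a := by
        rw [Real.div_rpow (hK.trans hL) (by linarith)]
        ring

theorem Real.mul_rpow_one_add_le_sq_add {ν M τ L r : ℝ} (hν : ν ∈ Icc (0 : ℝ) 1) (hM : 0 ≤ M)
    (hτ : 0 < τ)
    (hL : ((1 - ν) / ((1 + ν) * τ)) ^ ((1 - ν) / (1 + ν)) * M ^ (2 / (1 + ν)) ≤ L)
    (hr : 0 ≤ r) : M / (1 + ν) * r ^ (1 + ν) ≤ L / 2 * r ^ 2 + τ / 2 := by
  obtain ⟨hν0, hν1⟩ := id hν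
  have hLpos : 0 ≤ L := le_trans (by positivity) hL
  have hτ' : τ / (1 - ν) * ((1 - ν) / 2) ≤ τ / 2 := by
    rcases eq_or_lt_of_le hν1 with rfl | hlt
    · simp only [sub_self, div_zero, zero_mul]
      positivity
    · exact (show τ / (1 - ν) * ((1 - ν) / 2) = τ / 2 by field_simp).le
  calc M / (1 + ν) * r ^ (1 + ν)
      ≤ (L / (1 + ν)) ^ ((1 + ν) / 2) * (τ / (1 - ν)) ^ ((1 - ν) / 2) * r ^ (1 + ν) := by
        gcongr
        exact Real.div_one_add_le_rpow_mul_rpow hν hM hτ hL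
    _ = (L / (1 + ν) * r ^ 2) ^ ((1 + ν) / 2) * (τ / (1 - ν)) ^ ((1 - ν) / 2) := by
        rw [Real.mul_rpow (by positivity) (by positivity), ← Real.rpow_natCast,
          ← Real.rpow_mul hr]
        push_cast
        ring_nf
    _ ≤ (1 + ν) / 2 * (L / (1 + ν) * r ^ 2) + (1 - ν) / 2 * (τ / (1 - ν)) :=
        Real.geom_mean_le_arith_mean2_weighted (by linarith) (by linarith) (by positivity)
          (div_nonneg hτ.le (by linarith)) (by ring)
    _ ≤ L / 2 * r ^ 2 + τ / 2 := by
        have : (1 + ν) / 2 * (L / (1 + ν) * r ^ 2) = L / 2 * r ^ 2 := by field_simp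
        linarith

theorem stmt_5_general {H : Type*} [NormedAddCommGroup H] [InnerProductSpace ℝ H]
    [CompleteSpace H] (X : Set H) (hXconv : Convex ℝ X)
    (f : H → ℝ) (G : H → H)
    (hdiff : ∀ x ∈ X, HasGradientWithinAt f (G x) X x)
    (ν M τ L : ℝ) (hν : ν ∈ Set.Icc (0 : ℝ) 1) (hM : 0 < M) (hτ : 0 < τ)
    (hHolder : ∀ x ∈ X, ∀ y ∈ X, ‖G x - G y‖ ≤ M * ‖x - y‖ ^ ν)
    (hL : ((1 - ν) / ((1 + ν) * τ)) ^ ((1 - ν) / (1 + ν)) * M ^ (2 / (1 + ν)) ≤ L) :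
    ∀ x ∈ X, ∀ y ∈ X,
      f y ≤ f x + ⟪G x, y - x⟫ + L / 2 * ‖y - x‖ ^ 2 + τ / 2 := by
  intro x hx y hy
  have hdescent := hXconv.le_add_inner_add_rpow_of_holder_gradient hdiff hν.1 hHolder hx hy
  have hscalar := Real.mul_rpow_one_add_le_sq_add hν hM.le hτ hL (norm_nonneg (y - x))
  linarith

theorem stmt_5 {H : Type*} [NormedAddCommGroup H] [InnerProductSpace ℝ H]
    [CompleteSpace H] (X : Set H) (hXconv : Convex ℝ X)
    (f : H → ℝ) (G : H → H) (hconv : ConvexOn ℝ X f)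
    (hdiff : ∀ x ∈ X, HasGradientWithinAt f (G x) X x)
    (ν M τ L : ℝ) (hν : ν ∈ Set.Icc (0 : ℝ) 1) (hM : 0 < M) (hτ : 0 < τ)
    (hHolder : ∀ x ∈ X, ∀ y ∈ X, ‖G x - G y‖ ≤ M * ‖x - y‖ ^ ν)
    (hL : ((1 - ν) / ((1 + ν) * τ)) ^ ((1 - ν) / (1 + ν)) * M ^ (2 / (1 + ν)) ≤ L) :
    ∀ x ∈ X, ∀ y ∈ X,
      f y ≤ f x + ⟪G x, y - x⟫ + L / 2 * ‖y - x‖ ^ 2 + τ / 2 :=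
  stmt_5_general X hXconv f G hdiff ν M τ L hν hM hτ hHolder hL
end

section
/- Suppose positive reals L_k, γ_k, Γ_k satisfy Γ_k = L_k γ_k²/k, Γ_k ≤ Γ_{k-1}, 1/Γ_k - 1/Γ_{k-1} = γ_k/Γ_k for k ≥ 2, Γ_1 = L_1γ_1², and L_k ≤ 2((1-ν)/((1+ν)εγ_k))^((1-ν)/(1+ν)) M^{2/(1+ν)} for all k, where ν ∈ (0,1), M > 0, ε > 0. Then L_k γ_k² ≤ C_ν M^{2/(1+ν)} / (k^{(1+3ν)/(1+ν)} ε^{(1-ν)/(1+ν)}) for all k ≥ 1, where C_ν = ((1+2ν)/(1+3ν))^((1+3ν)/(1+ν)) ((1-ν)/(1+ν))^((1-ν)/(1+ν)) 2^((4+10ν)/(1+ν)). -/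
/-!
Write `p = (1 + 3ν)/(1 + ν)`, `q = 1/p` and `a = (1 - ν)/(1 + ν) = 2 - p`. The line-search bound
turns `kΓ_k = L_k γ_k²` into `kΓ_k ≤ A γ_k^p`, i.e. `γ_k ≥ (kΓ_k / A)^q`. Since
`Γ_{k-1}⁻¹ = (1 - γ_k) Γ_k⁻¹`, Bernoulli's inequality gives
`Γ_k^{-q} - Γ_{k-1}^{-q} ≥ q γ_k Γ_k^{-q} ≥ q k^q / A^q`, and summing these increments
`Γ_k^{-q} ≥ k^{q+1} / ((p + 1) A^q)`, that is `kΓ_k ≤ A (p + 1)^p / k^p`. The constant `C_ν`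
dominates `2 (p + 1)^p a^a` because `p + 1 = 2p (1 + 2ν)/(1 + 3ν)` and `p ≤ 4`.
-/

open Real

lemma add_one_rpow_add_one_le {x q : ℝ} (hx : 0 ≤ x) (hq : 0 ≤ q) :
    (x + 1) ^ (q + 1) ≤ x ^ (q + 1) + (q + 1) * (x + 1) ^ q := by
  have hx1 : 0 < x + 1 := by linarith
  -- Bernoulli's inequality at `s = -1 / (x + 1)`, multiplied through by `(x + 1) ^ (q + 1)`
  have hs : -1 ≤ -1 / (x + 1) := by
    rw [neg_div, neg_le_neg_iff, div_le_one hx1]; linarith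
  have hbern := one_add_mul_self_le_rpow_one_add hs (p := q + 1) (by linarith)
  rw [show 1 + -1 / (x + 1) = x / (x + 1) by field_simp; ring,
    div_rpow hx hx1.le, le_div_iff₀ (by positivity)] at hbern
  have hsplit : (x + 1) ^ (q + 1) = (x + 1) * (x + 1) ^ q := by
    rw [rpow_add hx1, rpow_one, mul_comm]
  rw [hsplit] at hbern ⊢
  have : (1 + (q + 1) * (-1 / (x + 1))) * ((x + 1) * (x + 1) ^ q)
      = (x + 1) * (x + 1) ^ q - (q + 1) * (x + 1) ^ q := by
    field_simp; ring
  linarith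

lemma mul_rpow_add_one_le_of_le_sub {u : ℕ → ℝ} {b q : ℝ} (hq : 0 ≤ q) (hb : 0 ≤ b)
    (h1 : b ≤ u 1) (hstep : ∀ k : ℕ, 2 ≤ k → b * (k : ℝ) ^ q ≤ u k - u (k - 1)) :
    ∀ k : ℕ, 1 ≤ k → b / (q + 1) * (k : ℝ) ^ (q + 1) ≤ u k := by
  intro k hk
  induction k, hk using Nat.le_induction with
  | base =>
    simpa using (div_le_self hb (by linarith : (1 : ℝ) ≤ q + 1)).trans h1
  | succ n hn ih =>
    have hgrowth := add_one_rpow_add_one_le (Nat.cast_nonneg n) hq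
    have hinc := hstep (n + 1) (by omega)
    simp only [Nat.add_sub_cancel, Nat.cast_add, Nat.cast_one] at hinc
    push_cast
    calc b / (q + 1) * ((n : ℝ) + 1) ^ (q + 1)
        ≤ b / (q + 1) * ((n : ℝ) ^ (q + 1) + (q + 1) * ((n : ℝ) + 1) ^ q) := by gcongr
      _ = b / (q + 1) * (n : ℝ) ^ (q + 1) + b * ((n : ℝ) + 1) ^ q := by
        field_simp
      _ ≤ u (n + 1) := by linarith

lemma mul_inv_rpow_le_sub {Γ Γ' γ q : ℝ} (hΓ : 0 < Γ) (hΓ' : 0 < Γ') (hq0 : 0 ≤ q)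
    (hq1 : q ≤ 1) (hrel : 1 / Γ - 1 / Γ' = γ / Γ) :
    q * γ * Γ⁻¹ ^ q ≤ Γ⁻¹ ^ q - Γ'⁻¹ ^ q := by
  have hγ : 1 - γ = Γ / Γ' := by
    field_simp at hrel ⊢; linarith
  have hinv : Γ'⁻¹ = (1 - γ) * Γ⁻¹ := by
    rw [hγ]; field_simp
  have hbern : (1 - γ) ^ q ≤ 1 - q * γ := by
    have hs : -1 ≤ -γ := by linarith [show 0 < Γ / Γ' by positivity]
    simpa [← sub_eq_add_neg] using rpow_one_add_le_one_add_mul_self hs hq0 hq1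
  calc q * γ * Γ⁻¹ ^ q = Γ⁻¹ ^ q - (1 - q * γ) * Γ⁻¹ ^ q := by ring
    _ ≤ Γ⁻¹ ^ q - (1 - γ) ^ q * Γ⁻¹ ^ q := by gcongr
    _ = Γ⁻¹ ^ q - Γ'⁻¹ ^ q := by
      rw [hinv, mul_rpow (by rw [hγ]; positivity) (by positivity)]

lemma rpow_div_rpow_le_mul_inv_rpow {k Γ γ A p : ℝ} (hk : 0 ≤ k) (hΓ : 0 < Γ) (hγ : 0 ≤ γ)
    (hA : 0 < A) (hp : 0 < p) (h : k * Γ ≤ A * γ ^ p) :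
    k ^ p⁻¹ / A ^ p⁻¹ ≤ γ * Γ⁻¹ ^ p⁻¹ := by
  have hγ_ge : (k * Γ / A) ^ p⁻¹ ≤ γ :=
    calc (k * Γ / A) ^ p⁻¹ ≤ (γ ^ p) ^ p⁻¹ := by
          gcongr
          rwa [div_le_iff₀' hA]
      _ = γ := rpow_rpow_inv hγ hp.ne'
  calc k ^ p⁻¹ / A ^ p⁻¹ = (k * Γ / A) ^ p⁻¹ * Γ⁻¹ ^ p⁻¹ := by
        rw [← mul_rpow (by positivity) (by positivity), ← div_rpow (by positivity) hA.le]
        field_simp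
    _ ≤ γ * Γ⁻¹ ^ p⁻¹ := by gcongr

lemma mul_le_div_rpow_of_le_inv_rpow {k Γ A p : ℝ} (hk : 0 < k) (hΓ : 0 < Γ) (hA : 0 < A)
    (hp : 0 < p) (h : p⁻¹ / A ^ p⁻¹ / (p⁻¹ + 1) * k ^ (p⁻¹ + 1) ≤ Γ⁻¹ ^ p⁻¹) :
    k * Γ ≤ A * (p + 1) ^ p / k ^ p := by
  have hΓq : Γ ^ p⁻¹ ≤ A ^ p⁻¹ * (p + 1) / k ^ (p⁻¹ + 1) := by
    rw [inv_rpow hΓ.le, le_inv_comm₀ (by positivity) (by positivity)] at h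
    refine h.trans_eq ?_
    field_simp
    ring
  have hΓ_le : Γ ≤ A * (p + 1) ^ p / k ^ (p + 1) :=
    calc Γ = (Γ ^ p⁻¹) ^ p := (rpow_inv_rpow hΓ.le hp.ne').symm
      _ ≤ (A ^ p⁻¹ * (p + 1) / k ^ (p⁻¹ + 1)) ^ p := by gcongr
      _ = A * (p + 1) ^ p / k ^ (p + 1) := by
        rw [div_rpow (by positivity) (by positivity), mul_rpow (by positivity) (by positivity),
          rpow_inv_rpow hA.le hp.ne', ← rpow_mul hk.le, add_mul, inv_mul_cancel₀ hp.ne',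
          one_mul, add_comm 1 p]
  calc k * Γ ≤ k * (A * (p + 1) ^ p / k ^ (p + 1)) := by gcongr
    _ = A * (p + 1) ^ p / k ^ p := by
      rw [rpow_add_one hk.ne']
      field_simp

theorem mul_le_div_rpow_of_le_mul_rpow {p A : ℝ} (hp : 1 ≤ p) (hA : 0 < A) {γ Γ : ℕ → ℝ}
    (hγ : ∀ k : ℕ, 1 ≤ k → 0 ≤ γ k) (hΓ : ∀ k : ℕ, 1 ≤ k → 0 < Γ k) (hγ1 : γ 1 = 1)
    (hrel : ∀ k : ℕ, 2 ≤ k → 1 / Γ k - 1 / Γ (k - 1) = γ k / Γ k)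
    (hbound : ∀ k : ℕ, 1 ≤ k → k * Γ k ≤ A * γ k ^ p) :
    ∀ k : ℕ, 1 ≤ k → k * Γ k ≤ A * (p + 1) ^ p / k ^ p := by
  set q := p⁻¹
  have hp0 : 0 < p := by linarith
  have hq0 : 0 < q := inv_pos.2 hp0
  have hq1 : q ≤ 1 := inv_le_one_of_one_le₀ hp
  have hgap : ∀ k : ℕ, 1 ≤ k → (k : ℝ) ^ q / A ^ q ≤ γ k * (Γ k)⁻¹ ^ q := fun k hk ↦
    rpow_div_rpow_le_mul_inv_rpow (Nat.cast_nonneg k) (hΓ k hk) (hγ k hk) hA hp0 (hbound k hk)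
  have hbase : q / A ^ q ≤ (Γ 1)⁻¹ ^ q := by
    have h := hgap 1 le_rfl
    rw [hγ1, Nat.cast_one, one_rpow, one_mul] at h
    exact (div_le_div_of_nonneg_right hq1 (by positivity)).trans h
  have hstep : ∀ k : ℕ, 2 ≤ k → q / A ^ q * (k : ℝ) ^ q ≤ (Γ k)⁻¹ ^ q - (Γ (k - 1))⁻¹ ^ q := by
    intro k hk
    calc q / A ^ q * (k : ℝ) ^ q = q * ((k : ℝ) ^ q / A ^ q) := by ring
      _ ≤ q * (γ k * (Γ k)⁻¹ ^ q) := by gcongr; exact hgap k (by omega)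
      _ ≤ (Γ k)⁻¹ ^ q - (Γ (k - 1))⁻¹ ^ q := by
        rw [← mul_assoc]
        exact mul_inv_rpow_le_sub (hΓ k (by omega)) (hΓ (k - 1) (by omega)) hq0.le hq1 (hrel k hk)
  have hlower := mul_rpow_add_one_le_of_le_sub (u := fun k ↦ (Γ k)⁻¹ ^ q) hq0.le (by positivity)
    hbase hstep
  exact fun k hk ↦ mul_le_div_rpow_of_le_inv_rpow (by exact_mod_cast hk) (hΓ k hk) hA hp0
    (hlower k hk)

lemma mul_sq_le_mul_rpow_of_le_div_rpow {L K m a b c γ : ℝ} (hγ : 0 < γ) (hb : 0 ≤ b)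
    (hc : 0 ≤ c) (hL : L ≤ K * (b / (c * γ)) ^ a * m) :
    L * γ ^ 2 ≤ K * (b / c) ^ a * m * γ ^ (2 - a) := by
  have hsplit : (b / (c * γ)) ^ a = (b / c) ^ a * γ ^ (-a) := by
    rw [div_mul_eq_div_div, div_rpow (by positivity) hγ.le, rpow_neg hγ.le, div_eq_mul_inv]
  calc L * γ ^ 2 ≤ K * (b / (c * γ)) ^ a * m * γ ^ (2 : ℝ) := by
        rw [rpow_two]; gcongr
    _ = K * (b / c) ^ a * m * γ ^ (2 - a) := by
        rw [hsplit, sub_eq_add_neg, rpow_add hγ, mul_comm (γ ^ (2 : ℝ))]; ring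

lemma two_mul_add_one_rpow_le {ν : ℝ} (hν : 0 ≤ ν) :
    2 * ((1 + 3 * ν) / (1 + ν) + 1) ^ ((1 + 3 * ν) / (1 + ν)) ≤
      ((1 + 2 * ν) / (1 + 3 * ν)) ^ ((1 + 3 * ν) / (1 + ν)) * 2 ^ ((4 + 10 * ν) / (1 + ν)) := by
  set p := (1 + 3 * ν) / (1 + ν) with hp
  have hp0 : 0 < p := by positivity
  have hp4 : p ≤ 4 := by rw [hp, div_le_iff₀ (by positivity)]; linarith
  have hfactor : p + 1 = 2 * ((1 + 2 * ν) / (1 + 3 * ν)) * p := by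
    rw [hp]; field_simp; ring
  have hexp : (4 + 10 * ν) / (1 + ν) = 1 + p + 2 * p := by
    rw [hp]; field_simp; ring
  have hpp : p ^ p ≤ (2 : ℝ) ^ (2 * p) := by
    calc p ^ p ≤ (4 : ℝ) ^ p := by gcongr
      _ = (2 : ℝ) ^ (2 * p) := by rw [rpow_mul (by norm_num)]; norm_num
  rw [hfactor, hexp, mul_rpow (by positivity) hp0.le, mul_rpow (by norm_num) (by positivity),
    rpow_add (by norm_num), rpow_add (by norm_num), rpow_one]
  calc 2 * (2 ^ p * ((1 + 2 * ν) / (1 + 3 * ν)) ^ p * p ^ p)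
      ≤ 2 * (2 ^ p * ((1 + 2 * ν) / (1 + 3 * ν)) ^ p * (2 : ℝ) ^ (2 * p)) := by gcongr
    _ = ((1 + 2 * ν) / (1 + 3 * ν)) ^ p * (2 * 2 ^ p * 2 ^ (2 * p)) := by ring

theorem stmt_15_general (ν M ε : ℝ) (hν : ν ∈ Set.Ioo (0 : ℝ) 1) (hM : 0 < M) (hε : 0 < ε)
    (L γ Γ : ℕ → ℝ)
    (hγpos : ∀ k : ℕ, 1 ≤ k → 0 < γ k)
    (hΓpos : ∀ k : ℕ, 1 ≤ k → 0 < Γ k)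
    (hΓdef : ∀ k : ℕ, 1 ≤ k → Γ k = L k * γ k ^ 2 / (k : ℝ))
    (hγ1 : γ 1 = 1)
    (hrel : ∀ k : ℕ, 2 ≤ k → 1 / Γ k - 1 / Γ (k - 1) = γ k / Γ k)
    (hLk : ∀ k : ℕ, 1 ≤ k →
      L k ≤ 2 * ((1 - ν) / ((1 + ν) * ε * γ k)) ^ ((1 - ν) / (1 + ν)) *
        M ^ (2 / (1 + ν))) :
    ∀ k : ℕ, 1 ≤ k →
      L k * γ k ^ 2 ≤
        (((1 + 2 * ν) / (1 + 3 * ν)) ^ ((1 + 3 * ν) / (1 + ν)) *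
            ((1 - ν) / (1 + ν)) ^ ((1 - ν) / (1 + ν)) *
            (2 : ℝ) ^ ((4 + 10 * ν) / (1 + ν))) * M ^ (2 / (1 + ν)) /
          ((k : ℝ) ^ ((1 + 3 * ν) / (1 + ν)) * ε ^ ((1 - ν) / (1 + ν))) := by
  obtain ⟨hν0, hν1⟩ := hν
  set a := (1 - ν) / (1 + ν) with ha
  set p := (1 + 3 * ν) / (1 + ν) with hp
  set A := 2 * ((1 - ν) / ((1 + ν) * ε)) ^ a * M ^ (2 / (1 + ν)) with hA_def
  have hp1 : 1 ≤ p := by rw [hp, le_div_iff₀ (by positivity)]; linarith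
  have hpa : 2 - a = p := by rw [ha, hp]; field_simp; ring
  have hA : A = 2 * a ^ a * M ^ (2 / (1 + ν)) / ε ^ a := by
    rw [hA_def, show (1 - ν) / ((1 + ν) * ε) = a / ε by rw [ha]; field_simp,
      div_rpow (by positivity) hε.le]
    ring
  have hLγ : ∀ k : ℕ, 1 ≤ k → L k * γ k ^ 2 = k * Γ k := fun k hk ↦ by
    rw [hΓdef k hk]; field_simp
  have hbound : ∀ k : ℕ, 1 ≤ k → k * Γ k ≤ A * γ k ^ p := fun k hk ↦ by
    rw [← hLγ k hk, ← hpa]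
    exact mul_sq_le_mul_rpow_of_le_div_rpow (hγpos k hk) (by linarith) (by positivity) (hLk k hk)
  intro k hk
  calc L k * γ k ^ 2 = k * Γ k := hLγ k hk
    _ ≤ A * (p + 1) ^ p / k ^ p := mul_le_div_rpow_of_le_mul_rpow hp1 (by positivity)
        (fun k hk ↦ (hγpos k hk).le) hΓpos hγ1 hrel hbound k hk
    _ = 2 * (p + 1) ^ p * a ^ a * M ^ (2 / (1 + ν)) / (k ^ p * ε ^ a) := by
        rw [hA]; field_simp
    _ ≤ ((1 + 2 * ν) / (1 + 3 * ν)) ^ p * 2 ^ ((4 + 10 * ν) / (1 + ν)) * a ^ a *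
          M ^ (2 / (1 + ν)) / (k ^ p * ε ^ a) := by
        gcongr ?_ * _ * _ / _
        exact two_mul_add_one_rpow_le hν0.le
    _ = _ := by ring

theorem stmt_15 (ν M ε : ℝ) (hν : ν ∈ Set.Ioo (0 : ℝ) 1) (hM : 0 < M) (hε : 0 < ε)
    (L γ Γ : ℕ → ℝ)
    (hLpos : ∀ k : ℕ, 1 ≤ k → 0 < L k) (hγpos : ∀ k : ℕ, 1 ≤ k → 0 < γ k)
    (hΓpos : ∀ k : ℕ, 1 ≤ k → 0 < Γ k)
    (hΓdef : ∀ k : ℕ, 1 ≤ k → Γ k = L k * γ k ^ 2 / (k : ℝ))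
    (hγ1 : γ 1 = 1)
    (hmono : ∀ k : ℕ, 2 ≤ k → Γ k ≤ Γ (k - 1))
    (hrel : ∀ k : ℕ, 2 ≤ k → 1 / Γ k - 1 / Γ (k - 1) = γ k / Γ k)
    (hLk : ∀ k : ℕ, 1 ≤ k →
      L k ≤ 2 * ((1 - ν) / ((1 + ν) * ε * γ k)) ^ ((1 - ν) / (1 + ν)) *
        M ^ (2 / (1 + ν))) :
    ∀ k : ℕ, 1 ≤ k →
      L k * γ k ^ 2 ≤
        (((1 + 2 * ν) / (1 + 3 * ν)) ^ ((1 + 3 * ν) / (1 + ν)) *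
            ((1 - ν) / (1 + ν)) ^ ((1 - ν) / (1 + ν)) *
            (2 : ℝ) ^ ((4 + 10 * ν) / (1 + ν))) * M ^ (2 / (1 + ν)) /
          ((k : ℝ) ^ ((1 + 3 * ν) / (1 + ν)) * ε ^ ((1 - ν) / (1 + ν))) :=
  stmt_15_general ν M ε hν hM hε L γ Γ hγpos hΓpos hΓdef hγ1 hrel hLk
end
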